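/- Let F : R^M → R be C⁴ and let Tay₂F denote its second-order Taylor polynomial at 0. Define for φ ∈ R^M and a norm ‖·‖_Φ on R^M the quantity ‖H‖_{T_φ(Φ)} := Σ_{n=0}^{4} (1/n!) sup_{‖f_i‖_Φ ≤ 1} |D^n H(φ)[f_1,…,f_n]|. Then ‖F − Tay₂F‖_{T_φ(Φ)} ≤ (1 + ‖φ‖_Φ)³ · sup_{t∈[0,1], k∈{3,4}} ‖D^k F(tφ)‖_{T^k_{tφ}(Φ)}, where ‖D^k F(ψ)‖_{T^k_ψ(Φ)} := sup_{‖f_i‖_Φ≤1} |D^k F(ψ)[f_1,…,f_k]|. -/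

import Mathlib

/-!
Write `G := F - taylor₂ F`. Since `taylor₂ F` is a quadratic polynomial whose Hessian is the
(symmetric) Hessian of `F` at `0`, the derivatives of `G` of order `0, 1, 2` vanish at `0`, and
`D³G = D³F`, `D⁴G = D⁴F`. Applying the mean value inequality `3 - n` times along the segment
`[0, φ]` gives `‖DⁿG(φ)‖ ≤ M ‖φ‖^(3-n)` for `n ≤ 3`, where `M` bounds `‖D³F‖` and `‖D⁴F‖` on
the segment, and `∑_{n ≤ 4} ‖φ‖^(3-n) / n! ≤ (1 + ‖φ‖)³` is the binomial theorem with room to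
spare.
-/

open Finset

section

variable {E : Type*} [NormedAddCommGroup E] [NormedSpace ℝ E]

theorem Convex.norm_iteratedFDeriv_le_mul_norm_pow {G : Type*} [NormedAddCommGroup G]
    [NormedSpace ℝ G] {s : Set E} (hs : Convex ℝ s) (h0 : (0 : E) ∈ s) {f : E → G} {M : ℝ} {n k : ℕ} (hf : ContDiff ℝ (n + k : ℕ) f)
    (hzero : ∀ j < k, iteratedFDeriv ℝ (n + j) f 0 = 0)
    (hM : ∀ y ∈ s, ‖iteratedFDeriv ℝ (n + k) f y‖ ≤ M) :
    ∀ x ∈ s, ‖iteratedFDeriv ℝ n f x‖ ≤ M * ‖x‖ ^ k := by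
  induction k generalizing n with
  | zero => simpa using hM
  | succ k ih =>
    have hshift : n + 1 + k = n + (k + 1) := by omega
    have hnext : ∀ y ∈ s, ‖iteratedFDeriv ℝ (n + 1) f y‖ ≤ M * ‖y‖ ^ k :=
      ih (by rwa [hshift])
        (fun j hj => by rw [show n + 1 + j = n + (j + 1) by omega]; exact hzero _ (by omega))
        (by rwa [hshift])
    have hM0 : 0 ≤ M := (norm_nonneg _).trans (hM 0 h0)
    intro x hx
    have hderiv : ∀ y ∈ segment ℝ 0 x, ‖fderiv ℝ (iteratedFDeriv ℝ n f) y‖ ≤ M * ‖x‖ ^ k := by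
      intro y hy
      have hyx : ‖y‖ ≤ ‖x‖ := by simpa using norm_sub_le_of_mem_segment hy
      rw [norm_fderiv_iteratedFDeriv]
      exact (hnext y (hs.segment_subset h0 hx hy)).trans (by gcongr)
    have hdiff : Differentiable ℝ (iteratedFDeriv ℝ n f) :=
      hf.differentiable_iteratedFDeriv (by norm_cast; omega)
    have := (convex_segment (0 : E) x).norm_image_sub_le_of_norm_fderiv_le
      (fun y _ => hdiff y) hderiv (left_mem_segment ℝ 0 x) (right_mem_segment ℝ 0 x)
    have hvanish : iteratedFDeriv ℝ n f 0 = 0 := hzero 0 (by omega)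
    simpa [hvanish, pow_succ, mul_assoc] using this

theorem hasFDerivAt_half_apply_self {A : E →L[ℝ] E →L[ℝ] ℝ} (hA : ∀ u v, A u v = A v u)
    (x : E) : HasFDerivAt (fun ψ => (1 / 2 : ℝ) * A ψ ψ) (A x) x := by
  have hquad : HasFDerivAt (fun ψ => A ψ ψ) (A x + A.flip x) x := by
    simpa using A.hasFDerivAt.clm_apply (hasFDerivAt_id x)
  refine (hquad.const_mul (1 / 2 : ℝ)).congr_fderiv ?_
  ext v
  simp [hA v x]
  ring

noncomputable def taylor₂ (F : E → ℝ) (ψ : E) : ℝ :=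
  F 0 + fderiv ℝ F 0 ψ + (1 / 2) * iteratedFDeriv ℝ 2 F 0 ![ψ, ψ]

namespace taylor₂

variable {F : E → ℝ}

theorem eq_hessian (F : E → ℝ) :
    taylor₂ F = fun ψ => F 0 + fderiv ℝ F 0 ψ + (1 / 2) * fderiv ℝ (fderiv ℝ F) 0 ψ ψ := by
  funext ψ
  simp [taylor₂, iteratedFDeriv_two_apply]

theorem contDiff (F : E → ℝ) {n : WithTop ℕ∞} : ContDiff ℝ n (taylor₂ F) := by
  rw [eq_hessian]
  fun_prop

theorem hasFDerivAt (hF : ContDiffAt ℝ 2 F 0) (x : E) :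
    HasFDerivAt (taylor₂ F) (fderiv ℝ F 0 + fderiv ℝ (fderiv ℝ F) 0 x) x := by
  have hsymm := hF.isSymmSndFDerivAt (by simp)
  rw [eq_hessian]
  exact (((hasFDerivAt_const (F 0) x).add (fderiv ℝ F 0).hasFDerivAt).add
    (hasFDerivAt_half_apply_self hsymm.eq x)).congr_fderiv (by rw [zero_add])

theorem fderiv_fderiv (hF : ContDiffAt ℝ 2 F 0) (x : E) :
    fderiv ℝ (fderiv ℝ (taylor₂ F)) x = fderiv ℝ (fderiv ℝ F) 0 := by
  have hfderiv : fderiv ℝ (taylor₂ F) = fun y => fderiv ℝ F 0 + fderiv ℝ (fderiv ℝ F) 0 y :=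
    funext fun y => (hasFDerivAt hF y).fderiv
  rw [hfderiv]
  exact (((hasFDerivAt_const (fderiv ℝ F 0) x).add
    (fderiv ℝ (fderiv ℝ F) 0).hasFDerivAt).fderiv).trans (zero_add _)

theorem iteratedFDeriv_zero_eq (hF : ContDiffAt ℝ 2 F 0) {j : ℕ} (hj : j ≤ 2) :
    iteratedFDeriv ℝ j (taylor₂ F) 0 = iteratedFDeriv ℝ j F 0 := by
  ext m
  interval_cases j
  · simp [eq_hessian]
  · simp [iteratedFDeriv_one_apply, (hasFDerivAt hF 0).fderiv]
  · simp [iteratedFDeriv_two_apply, fderiv_fderiv hF]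

theorem iteratedFDeriv_eq_zero (hF : ContDiffAt ℝ 2 F 0) {j : ℕ} (hj : 3 ≤ j) (x : E) :
    iteratedFDeriv ℝ j (taylor₂ F) x = 0 := by
  obtain ⟨i, rfl⟩ := Nat.exists_eq_add_of_le' hj
  rw [← norm_eq_zero, show i + 3 = i + 1 + 1 + 1 from rfl, ← norm_iteratedFDeriv_fderiv,
    ← norm_iteratedFDeriv_fderiv, funext (fderiv_fderiv hF),
    iteratedFDeriv_const_of_ne (Nat.succ_ne_zero i), Pi.zero_apply, norm_zero]

end taylor₂

-- For `n = 4` the exponent `3 - n` truncates to `0`.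
theorem norm_iteratedFDeriv_sub_taylor₂_le {F : E → ℝ} (hF : ContDiff ℝ 4 F) {φ : E} {M : ℝ}
    (hM₃ : ∀ y ∈ segment ℝ 0 φ, ‖iteratedFDeriv ℝ 3 F y‖ ≤ M)
    (hM₄ : ‖iteratedFDeriv ℝ 4 F φ‖ ≤ M) {n : ℕ} (hn : n ≤ 4) :
    ‖iteratedFDeriv ℝ n (F - taylor₂ F) φ‖ ≤ M * ‖φ‖ ^ (3 - n) := by
  have hF₂ : ContDiffAt ℝ 2 F 0 := (hF.of_le (by norm_num)).contDiffAt
  have hsub : ∀ j ≤ 4, ∀ x, iteratedFDeriv ℝ j (F - taylor₂ F) x =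
      iteratedFDeriv ℝ j F x - iteratedFDeriv ℝ j (taylor₂ F) x := fun j hj x =>
    iteratedFDeriv_sub_apply (hF.of_le (by exact_mod_cast hj)).contDiffAt
      (taylor₂.contDiff F).contDiffAt
  have hhigh : ∀ j, 3 ≤ j → j ≤ 4 → ∀ x,
      iteratedFDeriv ℝ j (F - taylor₂ F) x = iteratedFDeriv ℝ j F x :=
    fun j hj₃ hj₄ x => by rw [hsub j hj₄, taylor₂.iteratedFDeriv_eq_zero hF₂ hj₃, sub_zero]
  rcases hn.lt_or_eq with hn₄ | rfl
  · refine (convex_segment 0 φ).norm_iteratedFDeriv_le_mul_norm_pow (left_mem_segment ℝ 0 φ)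
      (k := 3 - n) ?_ (fun j hj => ?_) ?_ φ (right_mem_segment ℝ 0 φ)
    · rw [Nat.add_sub_cancel' (by omega)]
      exact (hF.sub (taylor₂.contDiff F)).of_le (by norm_num)
    · rw [hsub _ (by omega), taylor₂.iteratedFDeriv_zero_eq hF₂ (by omega), sub_self]
    · rw [Nat.add_sub_cancel' (by omega)]
      exact fun y hy => (hhigh 3 le_rfl (by norm_num) y).symm ▸ hM₃ y hy
  · simpa [hhigh 4 (by norm_num) le_rfl] using hM₄

theorem le_iSup_Icc_smul_of_mem_segment {g : E → ℝ} (hg : Continuous g) {φ x : E}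
    (hx : x ∈ segment ℝ 0 φ) : g x ≤ ⨆ t : Set.Icc (0 : ℝ) 1, g ((t : ℝ) • φ) := by
  rw [segment_eq_image'] at hx
  obtain ⟨t, ht, rfl⟩ := hx
  have hbdd := (isCompact_range (f := fun t : Set.Icc (0 : ℝ) 1 => g ((t : ℝ) • φ))
    (by fun_prop)).bddAbove
  simpa using le_ciSup hbdd ⟨t, ht⟩

theorem sum_range_five_inv_factorial_mul_pow_le {r : ℝ} (hr : 0 ≤ r) :
    ∑ n ∈ range 5, 1 / (n.factorial : ℝ) * r ^ (3 - n) ≤ (1 + r) ^ 3 := by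
  norm_num [sum_range_succ, Nat.factorial]
  nlinarith [sq_nonneg r]

end

theorem stmt8 {E : Type*} [NormedAddCommGroup E] [NormedSpace ℝ E]
    (F : E → ℝ) (hF : ContDiff ℝ 4 F) (φ : E) :
    (∑ n ∈ Finset.range 5, (1 / (n.factorial : ℝ)) *
        ‖iteratedFDeriv ℝ n
          (fun ψ => F ψ - (F 0 + fderiv ℝ F 0 ψ +
            (1 / 2) * iteratedFDeriv ℝ 2 F 0 ![ψ, ψ])) φ‖)
      ≤ (1 + ‖φ‖) ^ 3 *
        ⨆ t : Set.Icc (0 : ℝ) 1,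
          max ‖iteratedFDeriv ℝ 3 F ((t : ℝ) • φ)‖ ‖iteratedFDeriv ℝ 4 F ((t : ℝ) • φ)‖ := by
  set M := ⨆ t : Set.Icc (0 : ℝ) 1,
    max ‖iteratedFDeriv ℝ 3 F ((t : ℝ) • φ)‖ ‖iteratedFDeriv ℝ 4 F ((t : ℝ) • φ)‖
  have hM : ∀ x ∈ segment ℝ 0 φ, max ‖iteratedFDeriv ℝ 3 F x‖ ‖iteratedFDeriv ℝ 4 F x‖ ≤ M :=
    fun x => le_iSup_Icc_smul_of_mem_segment
      ((hF.continuous_iteratedFDeriv (by norm_num)).norm.max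
        (hF.continuous_iteratedFDeriv le_rfl).norm)
  have hM₀ : 0 ≤ M :=
    (norm_nonneg _).trans ((le_max_left _ _).trans (hM 0 (left_mem_segment ℝ 0 φ)))
  change ∑ n ∈ range 5, 1 / (n.factorial : ℝ) * ‖iteratedFDeriv ℝ n (F - taylor₂ F) φ‖ ≤ _
  calc _ ≤ ∑ n ∈ range 5, 1 / (n.factorial : ℝ) * (M * ‖φ‖ ^ (3 - n)) := by
        gcongr with n hn
        exact norm_iteratedFDeriv_sub_taylor₂_le hF
          (fun y hy => (le_max_left _ _).trans (hM y hy))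
          ((le_max_right _ _).trans (hM φ (right_mem_segment ℝ 0 φ)))
          (Nat.le_of_lt_succ (mem_range.mp hn))
    _ = M * ∑ n ∈ range 5, 1 / (n.factorial : ℝ) * ‖φ‖ ^ (3 - n) := by
        rw [mul_sum]; congr 1 with n; ring
    _ ≤ M * (1 + ‖φ‖) ^ 3 := by
        gcongr
        exact sum_range_five_inv_factorial_mul_pow_le (norm_nonneg φ)
    _ = _ := mul_comm _ _
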